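/- Let H be the convex function H(u) = -½u²·log(u²) + ½u² for |u| ≤ e⁻¹, H(u) = (2/e)|u| - 1/(2e²) for |u| > e⁻¹, and H* its convex conjugate H*(y) = sup_{z∈ℝ}(yz − H(z)). Then for all s > 0 and θ ∈ [0,1], H*(θ·h(s)) ≤ θ²·H(s). -/

import Mathlib

open Real in
private lemma mono_aux' (x y : ℝ) (hx : 0 < x) (hxy : x ≤ y) (hy : y ≤ (exp 1)⁻¹) :
    -x * Real.log (x^2) ≤ -y * Real.log (y^2) := by
  have hy0 : 0 < y := lt_of_lt_of_le hx hxy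
  have hlb : Real.log (y/x) ≤ y/x - 1 := Real.log_le_sub_one_of_pos (by positivity)
  have hskel : x * Real.log (y/x) ≤ y - x := by
    have h := mul_le_mul_of_nonneg_left hlb hx.le
    have : x * (y/x - 1) = y - x := by field_simp
    linarith
  have hly : Real.log y ≤ -1 := by
    have := Real.log_le_log hy0 hy
    rwa [Real.log_inv, Real.log_exp] at this
  have hsplit : x * Real.log x = x * Real.log y - x * Real.log (y/x) := by
    rw [Real.log_div (ne_of_gt hy0) (ne_of_gt hx)]; ring
  have h2 : (y - x) * (Real.log y + 1) ≤ 0 :=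
    mul_nonpos_of_nonneg_of_nonpos (by linarith) (by linarith)
  rw [Real.log_pow, Real.log_pow]
  push_cast
  nlinarith [hskel, hsplit, h2]

private lemma hasDerivAt_Hlog' (x : ℝ) (hx : x ≠ 0) :
    HasDerivAt (fun u : ℝ => -(1/2) * u^2 * Real.log (u^2) + (1/2) * u^2)
      (-x * Real.log (x^2)) x := by
  have hsq : HasDerivAt (fun u : ℝ => u^2) (2*x) x := by
    simpa using hasDerivAt_pow 2 x
  have hlog : HasDerivAt (fun u : ℝ => Real.log (u^2)) (2*x / x^2) x :=
    hsq.log (by positivity)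
  have hmul : HasDerivAt (fun u : ℝ => u^2 * Real.log (u^2))
      (2*x * Real.log (x^2) + x^2 * (2*x / x^2)) x := hsq.mul hlog
  have := (hmul.const_mul (-(1/2):ℝ)).add (hsq.const_mul ((1/2):ℝ))
  convert this using 1
  · rfl
  · rfl
  · ext u; simp only [Pi.add_apply]; ring
  · field_simp
    ring

open Real in
private lemma tangent_log' (s z : ℝ) (hs : 0 < s) (hsz : s ≤ z) (hz : z ≤ (exp 1)⁻¹) :
    (-(1/2) * s^2 * Real.log (s^2) + (1/2) * s^2) + (-s * Real.log (s^2)) * (z - s)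
      ≤ -(1/2) * z^2 * Real.log (z^2) + (1/2) * z^2 := by
  rcases eq_or_lt_of_le hsz with rfl | hlt
  · simp
  set f : ℝ → ℝ := fun u => -(1/2) * u^2 * Real.log (u^2) + (1/2) * u^2 with hf
  have hcont : ContinuousOn f (Set.Icc s z) := by
    intro x hx
    have hx0 : x ≠ 0 := by have := hx.1; intro h; rw [h] at this; linarith
    exact ((hasDerivAt_Hlog' x hx0).continuousAt).continuousWithinAt
  have hdiff : DifferentiableOn ℝ f (Set.Ioo s z) := by
    intro x hx
    have hx0 : x ≠ 0 := by have := hx.1; intro h; rw [h] at this; linarith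
    exact (hasDerivAt_Hlog' x hx0).differentiableAt.differentiableWithinAt
  obtain ⟨c, hc, hceq⟩ := exists_deriv_eq_slope f hlt hcont hdiff
  have hc0 : c ≠ 0 := by have := hc.1; intro h; rw [h] at this; linarith
  have hderiv : deriv f c = -c * Real.log (c^2) := (hasDerivAt_Hlog' c hc0).deriv
  have hmono : -s * Real.log (s^2) ≤ -c * Real.log (c^2) :=
    mono_aux' s c hs hc.1.le (le_trans hc.2.le hz)
  rw [hderiv] at hceq
  have hzs : 0 < z - s := by linarith
  have h1 : (-s * Real.log (s^2)) * (z - s) ≤ f z - f s := by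
    rw [hceq] at hmono
    have := mul_le_mul_of_nonneg_right hmono hzs.le
    calc (-s * Real.log (s^2)) * (z - s) ≤ (f z - f s)/(z-s) * (z - s) := this
      _ = f z - f s := by field_simp
  have hfz : f z = -(1/2) * z^2 * Real.log (z^2) + (1/2) * z^2 := rfl
  have hfs : f s = -(1/2) * s^2 * Real.log (s^2) + (1/2) * s^2 := rfl
  rw [hfz, hfs] at h1; linarith

noncomputable def h (u : ℝ) : ℝ :=
  if |u| ≤ (Real.exp 1)⁻¹ then -u * Real.log (u ^ 2)
  else if u > (Real.exp 1)⁻¹ then 2 / Real.exp 1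
  else -(2 / Real.exp 1)

noncomputable def H (u : ℝ) : ℝ :=
  if |u| ≤ (Real.exp 1)⁻¹ then
    -(1 / 2) * u ^ 2 * Real.log (u ^ 2) + (1 / 2) * u ^ 2
  else (2 / Real.exp 1) * |u| - 1 / (2 * Real.exp 1 ^ 2)

/-- The Legendre–Fenchel conjugate of `H`. -/
noncomputable def Hstar (y : ℝ) : ℝ := sSup (Set.range fun z : ℝ => y * z - H z)

section Aux
open Real

private lemma exp1_pos' : (0:ℝ) < Real.exp 1 := Real.exp_pos 1

private lemma log_sq_le' (s : ℝ) (hs : 0 < s) (hsr : s ≤ (exp 1)⁻¹) : Real.log (s^2) ≤ -2 := by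
  have h1 : Real.log s ≤ -1 := by
    have := Real.log_le_log hs hsr
    rwa [Real.log_inv, Real.log_exp] at this
  rw [Real.log_pow]; push_cast; linarith

private lemma h_eq_log' (s : ℝ) (hs : 0 < s) (hsr : s ≤ (exp 1)⁻¹) :
    h s = -s * Real.log (s^2) := by
  rw [h, if_pos (by rwa [abs_of_pos hs])]

private lemma h_eq_lin' (s : ℝ) (hs : 0 < s) (hsr : ¬ (s ≤ (exp 1)⁻¹)) :
    h s = 2 / Real.exp 1 := by
  rw [h, if_neg (by rwa [abs_of_pos hs]), if_pos (by push_neg at hsr; exact hsr)]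

private lemma H_eq_log' (s : ℝ) (hs : 0 ≤ s) (hsr : s ≤ (exp 1)⁻¹) :
    H s = -(1/2) * s^2 * Real.log (s^2) + (1/2) * s^2 := by
  rw [H, if_pos (by rwa [abs_of_nonneg hs])]

private lemma H_eq_lin' (s : ℝ) (hs : 0 ≤ s) (hsr : ¬ (s ≤ (exp 1)⁻¹)) :
    H s = (2 / Real.exp 1) * s - 1 / (2 * Real.exp 1 ^ 2) := by
  rw [H, if_neg (by rwa [abs_of_nonneg hs]), abs_of_nonneg hs]

private lemma H_abs' (z : ℝ) : H |z| = H z := by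
  unfold H
  rw [abs_abs, sq_abs]

private lemma h_nonneg' (s : ℝ) (hs : 0 < s) : 0 ≤ h s := by
  by_cases hsr : s ≤ (exp 1)⁻¹
  · rw [h_eq_log' s hs hsr]
    have := log_sq_le' s hs hsr
    nlinarith
  · rw [h_eq_lin' s hs hsr]; positivity

private lemma h_le' (s : ℝ) (hs : 0 < s) : h s ≤ 2 / Real.exp 1 := by
  by_cases hsr : s ≤ (exp 1)⁻¹
  · rw [h_eq_log' s hs hsr]
    have key : Real.log ((Real.exp 1 * s)⁻¹) ≤ (Real.exp 1 * s)⁻¹ - 1 :=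
      Real.log_le_sub_one_of_pos (by positivity)
    rw [Real.log_inv, Real.log_mul (ne_of_gt exp1_pos') (ne_of_gt hs), Real.log_exp] at key
    have hes : 0 < Real.exp 1 * s := by positivity
    have h2 : -Real.log s * (Real.exp 1 * s) ≤ 1 := by
      have := mul_le_mul_of_nonneg_right key hes.le
      have h3 : ((Real.exp 1 * s)⁻¹) * (Real.exp 1 * s) = 1 := inv_mul_cancel₀ (ne_of_gt hes)
      nlinarith
    rw [Real.log_pow]; push_cast
    have he : 0 < Real.exp 1 := exp1_pos'
    rw [le_div_iff₀ he]
    nlinarith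
  · rw [h_eq_lin' s hs hsr]

private lemma H_nonneg' (z : ℝ) : 0 ≤ H z := by
  rw [← H_abs' z]
  set u := |z| with hu
  have hu0 : 0 ≤ u := abs_nonneg z
  by_cases hur : u ≤ (exp 1)⁻¹
  · rw [H_eq_log' u hu0 hur]
    rcases eq_or_lt_of_le hu0 with h0 | h0
    · simp [← h0]
    · have := log_sq_le' u h0 hur
      nlinarith
  · rw [H_eq_lin' u hu0 hur]
    push_neg at hur
    have he : 0 < Real.exp 1 := exp1_pos'
    have h1 : 2 / Real.exp 1 * (Real.exp 1)⁻¹ ≤ 2 / Real.exp 1 * u :=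
      mul_le_mul_of_nonneg_left hur.le (by positivity)
    have h2 : 2 / Real.exp 1 * (Real.exp 1)⁻¹ = 2 / Real.exp 1 ^2 := by
      rw [pow_two]; field_simp
    have h3 : 1 / (2 * Real.exp 1 ^ 2) ≤ 2 / Real.exp 1 ^ 2 := by
      rw [div_le_div_iff₀ (by positivity) (by positivity)]; nlinarith
    linarith

private lemma sh_le_2H' (s : ℝ) (hs : 0 < s) : s * h s ≤ 2 * H s := by
  by_cases hsr : s ≤ (exp 1)⁻¹
  · rw [h_eq_log' s hs hsr, H_eq_log' s hs.le hsr]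
    nlinarith [sq_nonneg s]
  · rw [h_eq_lin' s hs hsr, H_eq_lin' s hs.le hsr]
    push_neg at hsr
    have he : 0 < Real.exp 1 := exp1_pos'
    have h1 : 2 / Real.exp 1 * (Real.exp 1)⁻¹ ≤ 2 / Real.exp 1 * s :=
      mul_le_mul_of_nonneg_left hsr.le (by positivity)
    have h2 : 2 / Real.exp 1 * (Real.exp 1)⁻¹ = 2 / Real.exp 1 ^2 := by
      rw [pow_two]; field_simp
    have h3 : 1 / (2 * Real.exp 1 ^ 2) ≤ 1 / Real.exp 1 ^ 2 := by
      rw [div_le_div_iff₀ (by positivity) (by positivity)]; nlinarith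
    have h4 : (1:ℝ) / Real.exp 1 ^ 2 ≤ 2 / Real.exp 1 ^ 2 := by
      rw [div_le_div_iff₀ (by positivity) (by positivity)]; nlinarith
    have h6 : (0:ℝ) < 1/Real.exp 1^2 := by positivity
    have h7 : 1 / (2 * Real.exp 1 ^ 2) = (1/2) * (1/Real.exp 1^2) := by ring
    have h8 : (2:ℝ) / Real.exp 1 ^2 = 2 * (1/Real.exp 1^2) := by ring
    nlinarith

private lemma log_r_sq' : Real.log (((Real.exp 1)⁻¹)^2) = -2 := by
  rw [Real.log_pow, Real.log_inv, Real.log_exp]; norm_num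

private lemma tangent' (s z : ℝ) (hs : 0 < s) (hsz : s ≤ z) : H s + h s * (z - s) ≤ H z := by
  set r := (Real.exp 1)⁻¹ with hrdef
  have hrpos : 0 < r := by positivity
  by_cases hsr : s ≤ r
  · by_cases hzr : z ≤ r
    · rw [h_eq_log' s hs hsr, H_eq_log' s hs.le hsr, H_eq_log' z (by linarith) hzr]
      exact tangent_log' s z hs hsz hzr
    · push_neg at hzr
      have step1 : H s + h s * (r - s) ≤ H r := by
        rw [h_eq_log' s hs hsr, H_eq_log' s hs.le hsr, H_eq_log' r hrpos.le le_rfl]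
        exact tangent_log' s r hs hsr le_rfl
      have hHr : H r = (3/2) * r^2 := by
        rw [H_eq_log' r hrpos.le le_rfl, hrdef, log_r_sq']; ring
      have hHz : H z = (2/Real.exp 1) * z - 1/(2*Real.exp 1^2) := by
        rw [H_eq_lin' z (by linarith) (not_le.mpr hzr)]
      have h2e : 2 / Real.exp 1 = 2 * r := by rw [hrdef]; field_simp
      have hconst : 1 / (2 * Real.exp 1 ^ 2) = r^2/2 := by rw [hrdef]; field_simp
      have step2 : h s * (z - r) ≤ (2*r) * (z - r) := by
        apply mul_le_mul_of_nonneg_right _ (by linarith)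
        rw [← h2e]; exact h_le' s hs
      have : H r + (2*r)*(z-r) = H z := by rw [hHr, hHz, h2e, hconst]; ring
      nlinarith [step1, step2]
  · have hzr : ¬ (z ≤ r) := by push_neg at hsr ⊢; linarith
    rw [h_eq_lin' s hs hsr, H_eq_lin' s hs.le hsr, H_eq_lin' z (by linarith) hzr]
    ring_nf
    linarith

private lemma key' (s t z : ℝ) (hs : 0 < s) (ht0 : 0 ≤ t) (ht1 : t ≤ 1) (hz : 0 ≤ z) :
    t * h s * z - H z ≤ t^2 * H s := by
  by_cases hzs : s ≤ z
  · have htan := tangent' s z hs hzs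
    have h1 : 0 ≤ (1 - t) * h s * (z - s) :=
      mul_nonneg (mul_nonneg (by linarith) (h_nonneg' s hs)) (by linarith)
    have h2 := sh_le_2H' s hs
    have h3 := H_nonneg' s
    nlinarith [sq_nonneg (1 - t), mul_nonneg (mul_nonneg ht0 ht0) h3,
      mul_nonneg ht0 (sub_nonneg.mpr h2), mul_nonneg (sq_nonneg (1-t)) h3]
  · push_neg at hzs
    rcases eq_or_lt_of_le hz with rfl | hz0
    · have hH0 : H 0 = 0 := by
        rw [H_eq_log' 0 le_rfl (le_of_lt (by positivity))]; simp
      rw [hH0]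
      have := H_nonneg' s
      nlinarith
    by_cases hsr : s ≤ (exp 1)⁻¹
    · have hzr : z ≤ (exp 1)⁻¹ := le_of_lt (lt_of_lt_of_le hzs hsr)
      rw [h_eq_log' s hs hsr, H_eq_log' z hz hzr, H_eq_log' s hs.le hsr]
      set L := Real.log (s^2) with hL
      set M := Real.log (z^2) with hM
      have hb : L ≤ -2 := log_sq_le' s hs hsr
      have hab : M ≤ L := by
        apply Real.log_le_log (by positivity)
        nlinarith
      have hsq := sq_nonneg (t*s*(1 - L) + L*z)
      have hprod : 0 ≤ z^2 * ((1 - M) * (1 - L) - L^2) := by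
        have : (1 - M) * (1 - L) - L^2 = (-L)*(L - M) + (1 - M) + (-L) - L*M + L*M := by ring
        nlinarith [mul_nonneg (by linarith : (0:ℝ) ≤ -L) (sub_nonneg.mpr hab), sq_nonneg z]
      nlinarith [hsq, hprod, mul_nonneg (sq_nonneg (t*s*(1-L) + L*z)) (by linarith : (0:ℝ) ≤ -L)]
    · set r := (Real.exp 1)⁻¹ with hr
      have hrpos : 0 < r := by positivity
      push_neg at hsr
      have h2e : 2 / Real.exp 1 = 2 * r := by rw [hr]; field_simp
      have hconst : 1 / (2 * Real.exp 1 ^ 2) = r^2/2 := by rw [hr]; field_simp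
      rw [h_eq_lin' s hs (not_le.mpr hsr), H_eq_lin' s hs.le (not_le.mpr hsr), h2e, hconst]
      by_cases hzr : z ≤ r
      · rw [H_eq_log' z hz hzr]
        have hM : Real.log (z^2) ≤ -2 := log_sq_le' z hz0 hzr
        nlinarith [sq_nonneg (z - t*r), mul_nonneg (mul_nonneg ht0 ht0)
          (mul_nonneg hrpos.le (by linarith : (0:ℝ) ≤ s - r)),
          mul_nonneg (sq_nonneg z) (by linarith : (0:ℝ) ≤ -2 - Real.log (z^2)),
          mul_nonneg ht0 (mul_nonneg hrpos.le hz)]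
      · rw [H_eq_lin' z hz hzr]
        push_neg at hzr
        rw [h2e, hconst]
        nlinarith [sq_nonneg (3*t - 2), mul_nonneg (mul_nonneg (by linarith : (0:ℝ) ≤ 1 - t)
          (by linarith : (0:ℝ) ≤ z - r)) hrpos.le,
          mul_nonneg (mul_nonneg (mul_nonneg ht0 ht0) hrpos.le) (by linarith : (0:ℝ) ≤ s - z),
          sq_nonneg (t*r), mul_pos hrpos hrpos]

end Aux

theorem conjugate_estimate :
    ∀ s > (0 : ℝ), ∀ θ ∈ Set.Icc (0 : ℝ) 1, Hstar (θ * h s) ≤ θ ^ 2 * H s := by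
  intro s hs θ hθ
  obtain ⟨hθ0, hθ1⟩ := hθ
  unfold Hstar
  apply csSup_le (Set.range_nonempty _)
  rintro x ⟨z, rfl⟩
  simp only
  have hkey : ∀ w : ℝ, 0 ≤ w → θ * h s * w - H w ≤ θ^2 * H s := fun w hw =>
    key' s θ w hs hθ0 hθ1 hw
  rcases le_or_gt 0 z with hz | hz
  · exact hkey z hz
  · have h1 := hkey (-z) (by linarith)
    have h2 : H (-z) = H z := by rw [← H_abs' z, ← H_abs' (-z), abs_neg]
    have h3 : θ * h s * z ≤ θ * h s * (-z) := by
      have hnn : 0 ≤ θ * h s := mul_nonneg hθ0 (h_nonneg' s hs)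
      nlinarith
    rw [h2] at h1
    linarith
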